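/- (Convergence of synchronous projective splitting.) Let H and G_1, …, G_m be real Hilbert spaces, let A_i : G_i → 2^{G_i} (i = 1, …, m) and A_{m+1} : H → 2^H be maximally monotone, and let L_i : H → G_i be bounded linear operators. On the product Hilbert space 𝒦 := G_1 × ⋯ × G_m × H with elements p = (w_1, …, w_m, x), define B : 𝒦 → 2^𝒦 by ((w_1, …, w_m, x), (v_1, …, v_m, y)) ∈ gph(B) iff w_i ∈ A_i(v_i) for every i and y ∈ A_{m+1}(x), and define the bounded linear skew-adjoint operator K : 𝒦 → 𝒦 by K(w_1, …, w_m, x) := (−L_1 x, …, −L_m x, Σ_{i=1}^m L_i* w_i). Assume zer(B + K) := {p : −Kp ∈ Bp} is nonempty. Let ε, ε_θ ∈ (0, 1), step sizes τ_{i,k} ∈ [ε, 1/ε] (i = 1, …, m+1, k ∈ ℕ), relaxations θ_k ∈ [ε_θ, 2 − ε_θ], and let Q_k : 𝒦 → 𝒦 be the block-diagonal operator Q_k(w_1, …, w_m, x) := (τ_{1,k} w_1, …, τ_{m,k} w_m, τ_{m+1,k}⁻¹ x). Let p_0 ∈ 𝒦 and for each k: let p̂_k be the unique point with Q_k p_k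 − K p_k − Q_k p̂_k ∈ B p̂_k; if (Q_k − K)(p_k − p̂_k) ≠ 0 set μ_k := ⟨p_k − p̂_k, Q_k(p_k − p̂_k)⟩ / ‖(Q_k − K)(p_k − p̂_k)‖² and p_{k+1} := p_k − θ_k μ_k ((Q_k − K)p_k − (Q_k − K)p̂_k); otherwise p_{k+1} := p_k. Then p_k converges weakly to some p̄ ∈ zer(B + K). -/

import Mathlib

open Filter Topology

/-- A set-valued operator (identified with its graph) is monotone. -/
def IsMonotoneOp {E : Type*} [NormedAddCommGroup E] [InnerProductSpace ℝ E]
    (A : E → Set E) : Prop :=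
  ∀ ⦃x u y v⦄, u ∈ A x → v ∈ A y → (0:ℝ) ≤ inner ℝ (u - v) (x - y)

/-- A set-valued operator is maximally monotone. -/
def IsMaxMonotoneOp {E : Type*} [NormedAddCommGroup E] [InnerProductSpace ℝ E]
    (A : E → Set E) : Prop :=
  IsMonotoneOp A ∧ ∀ x u, (∀ y v, v ∈ A y → (0:ℝ) ≤ inner ℝ (u - v) (x - y)) → u ∈ A x

/-!
The operator `T = B + K` is maximally monotone because `K` is skew, and each iteration is a relaxed
projection of `p k` onto a halfspace `{z | ⟪d k, p k - ph k⟫ ≤ ⟪d k, p k - z⟫}` with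
`d k = (Q k - K) (p k - ph k) ∈ T (ph k)`; by monotonicity this halfspace contains `zer T`.
Hence `(p k)` is Fejér monotone with respect to `zer T`, with a decrease
`‖p (k+1) - z‖² + c ‖p k - ph k‖² ≤ ‖p k - z‖²`, so `p k - ph k → 0` and `d k → 0` strongly.
Since the graph of a maximally monotone operator is weak-strong closed, every weak cluster point of
`(p k)` is a zero of `T`, and Opial's argument gives weak convergence. Weak cluster points are taken
along ultrafilters finer than `atTop`; bounded sequences have such limits by Banach–Alaoglu.
-/

open scoped RealInnerProductSpace

def opInv {E : Type*} (T : E → Set E) : E → Set E := fun u => {x | u ∈ T x}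

def opPi {ι : Type*} {G : ι → Type*} (T : ∀ i, G i → Set (G i)) : PiLp 2 G → Set (PiLp 2 G) :=
  fun x => {u | ∀ i, u.ofLp i ∈ T i (x.ofLp i)}

def opProd {E F : Type*} (T : E → Set E) (S : F → Set F) :
    WithLp 2 (E × F) → Set (WithLp 2 (E × F)) :=
  fun x => {u | u.ofLp.1 ∈ T x.ofLp.1 ∧ u.ofLp.2 ∈ S x.ofLp.2}

namespace IsMaxMonotoneOp

variable {E : Type*} [NormedAddCommGroup E] [InnerProductSpace ℝ E] {T : E → Set E}

theorem exists_inner_nonpos (hT : IsMaxMonotoneOp T) (x u : E) :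
    ∃ y, ∃ v ∈ T y, ⟪u - v, x - y⟫ ≤ 0 ∧ (u ∉ T x → ⟪u - v, x - y⟫ < 0) := by
  by_cases hu : u ∈ T x
  · exact ⟨x, u, hu, by simp, fun h => (h hu).elim⟩
  · obtain ⟨y, v, hv, hlt⟩ : ∃ y v, v ∈ T y ∧ ⟪u - v, x - y⟫ < 0 := by
      by_contra! h
      exact hu (hT.2 x u h)
    exact ⟨y, v, hv, hlt.le, fun _ => hlt⟩

theorem inv (hT : IsMaxMonotoneOp T) : IsMaxMonotoneOp (opInv T) := by
  refine ⟨fun x u y v hu hv => ?_, fun x u h => hT.2 u x fun y v hv => ?_⟩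
  · rw [real_inner_comm]
    exact hT.1 hu hv
  · rw [real_inner_comm]
    exact h v y hv

theorem pi {ι : Type*} [Fintype ι] {G : ι → Type*} [∀ i, NormedAddCommGroup (G i)]
    [∀ i, InnerProductSpace ℝ (G i)] {T : ∀ i, G i → Set (G i)}
    (hT : ∀ i, IsMaxMonotoneOp (T i)) : IsMaxMonotoneOp (opPi T) := by
  refine ⟨fun x u y v hu hv => ?_, fun x u h i => ?_⟩
  · rw [PiLp.inner_apply]
    exact Finset.sum_nonneg fun i _ => (hT i).1 (hu i) (hv i)
  · choose y v hv hnonpos hneg using fun i => (hT i).exists_inner_nonpos (x.ofLp i) (u.ofLp i)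
    have hsum := h (WithLp.toLp 2 y) (WithLp.toLp 2 v) hv
    rw [PiLp.inner_apply] at hsum
    have hzero := (Finset.sum_eq_zero_iff_of_nonpos fun i _ => hnonpos i).1
      (le_antisymm (Finset.sum_nonpos fun i _ => hnonpos i) hsum) i (Finset.mem_univ i)
    by_contra hi
    exact (hneg i hi).ne hzero

theorem prod {F : Type*} [NormedAddCommGroup F] [InnerProductSpace ℝ F] {S : F → Set F}
    (hT : IsMaxMonotoneOp T) (hS : IsMaxMonotoneOp S) : IsMaxMonotoneOp (opProd T S) := by
  refine ⟨fun x u y v hu hv => ?_, fun x u h => ?_⟩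
  · rw [WithLp.prod_inner_apply]
    exact add_nonneg (hT.1 hu.1 hv.1) (hS.1 hu.2 hv.2)
  · obtain ⟨y₁, v₁, hv₁, hnonpos₁, hneg₁⟩ := hT.exists_inner_nonpos x.ofLp.1 u.ofLp.1
    obtain ⟨y₂, v₂, hv₂, hnonpos₂, hneg₂⟩ := hS.exists_inner_nonpos x.ofLp.2 u.ofLp.2
    have hsum := h (WithLp.toLp 2 (y₁, y₂)) (WithLp.toLp 2 (v₁, v₂)) ⟨hv₁, hv₂⟩
    simp only [WithLp.prod_inner_apply, WithLp.ofLp_sub, Prod.fst_sub, Prod.snd_sub] at hsum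
    constructor
    · by_contra h₁
      linarith [hneg₁ h₁]
    · by_contra h₂
      linarith [hneg₂ h₂]

theorem add_skew (hT : IsMaxMonotoneOp T) {K : E → E} (hK : ∀ x y, ⟪K x - K y, x - y⟫ = 0) :
    IsMaxMonotoneOp fun x => {u | u - K x ∈ T x} := by
  have hsplit : ∀ x y u v : E, ⟪u - v, x - y⟫ = ⟪(u - K x) - (v - K y), x - y⟫ := by
    intro x y u v
    rw [← sub_zero ⟪u - v, x - y⟫, ← hK x y, ← inner_sub_left]
    congr 1
    abel
  refine ⟨fun x u y v hu hv => (hsplit x y u v).symm ▸ hT.1 hu hv, fun x u h => ?_⟩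
  refine hT.2 x (u - K x) fun y v hv => ?_
  have := h y (v + K y) (by simpa using hv)
  rwa [hsplit, add_sub_cancel_right] at this

end IsMaxMonotoneOp

section WeakConvergence

variable {E : Type*} [NormedAddCommGroup E] [InnerProductSpace ℝ E] {ι : Type*} {F : Filter ι}

def WeakTendsto (p : ι → E) (F : Filter ι) (x : E) : Prop :=
  ∀ q, Tendsto (fun k => ⟪p k, q⟫) F (𝓝 ⟪x, q⟫)

theorem WeakTendsto.sub_of_tendsto_zero {p r : ι → E} {x : E} (hp : WeakTendsto p F x)
    (hr : Tendsto r F (𝓝 0)) : WeakTendsto (fun k => p k - r k) F x := fun q => by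
  simpa [inner_sub_left] using (hp q).sub (hr.inner tendsto_const_nhds)

theorem WeakTendsto.tendsto_inner {x u : ι → E} {x₀ u₀ : E} (hx : WeakTendsto x F x₀)
    (hxb : IsBoundedUnder (· ≤ ·) F fun k => ‖x k‖) (hu : Tendsto u F (𝓝 u₀)) :
    Tendsto (fun k => ⟪u k, x k⟫) F (𝓝 ⟪u₀, x₀⟫) := by
  have hsmall : Tendsto (fun k => ⟪u k - u₀, x k⟫) F (𝓝 0) :=
    squeeze_zero_norm (fun k => norm_inner_le_norm _ _)
      ((tendsto_iff_norm_sub_tendsto_zero.1 hu).zero_mul_isBoundedUnder_le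
        (by simpa [Function.comp_def] using hxb))
  simpa [inner_sub_left, real_inner_comm] using hsmall.add (hx u₀)

theorem exists_weakTendsto_of_isBoundedUnder [CompleteSpace E] (V : Ultrafilter ι) {p : ι → E}
    (hp : IsBoundedUnder (· ≤ ·) V fun k => ‖p k‖) : ∃ x, WeakTendsto p V x := by
  obtain ⟨M, hM⟩ := hp
  let f : ι → WeakDual ℝ E := fun k => StrongDual.toWeakDual (InnerProductSpace.toDual ℝ E (p k))
  have hball : ∀ᶠ k in (V : Filter ι),
      f k ∈ WeakDual.toStrongDual ⁻¹' Metric.closedBall (0 : StrongDual ℝ E) M := by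
    filter_upwards [eventually_map.1 hM] with k hk
    simpa [f] using hk
  obtain ⟨φ, -, hφ⟩ := (WeakDual.isCompact_closedBall (0 : StrongDual ℝ E) M).ultrafilter_le_nhds
    (V.map f) (le_principal_iff.2 hball)
  refine ⟨(InnerProductSpace.toDual ℝ E).symm (WeakDual.toStrongDual φ), fun q => ?_⟩
  rw [InnerProductSpace.toDual_symm_apply]
  exact (tendsto_iff_forall_eval_tendsto_topDualPairing.mp hφ) q

theorem IsMaxMonotoneOp.mem_of_weakTendsto {T : E → Set E} (hT : IsMaxMonotoneOp T) [F.NeBot]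
    {x u : ι → E} {x₀ u₀ : E} (hmem : ∀ᶠ k in F, u k ∈ T (x k)) (hx : WeakTendsto x F x₀)
    (hxb : IsBoundedUnder (· ≤ ·) F fun k => ‖x k‖) (hu : Tendsto u F (𝓝 u₀)) : u₀ ∈ T x₀ := by
  refine hT.2 x₀ u₀ fun y v hv => ge_of_tendsto ?_ (hmem.mono fun k hk => hT.1 hk hv)
  have hlim := (((hx.tendsto_inner hxb hu).sub (hu.inner (tendsto_const_nhds (x := y)))).sub
    (hx v)).add_const ⟪v, y⟫
  simp only [inner_sub_left, inner_sub_right, real_inner_comm v] at hlim ⊢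
  convert hlim using 2 <;> ring

end WeakConvergence

section Fejer

variable {E : Type*} [NormedAddCommGroup E] {p : ℕ → E}

theorem isBoundedUnder_norm_of_antitone {z : E} (h : Antitone fun k => ‖p k - z‖)
    (F : Filter ℕ) : IsBoundedUnder (· ≤ ·) F fun k => ‖p k‖ :=
  isBoundedUnder_of ⟨‖z‖ + ‖p 0 - z‖, fun k =>
    (norm_le_norm_add_norm_sub' (p k) z).trans ((add_le_add_iff_left _).2 (h (Nat.zero_le k)))⟩

variable [InnerProductSpace ℝ E]

theorem exists_tendsto_inner_sub_of_antitone {x y : E} (hx : Antitone fun k => ‖p k - x‖)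
    (hy : Antitone fun k => ‖p k - y‖) : ∃ l, Tendsto (fun k => ⟪p k, x - y⟫) atTop (𝓝 l) := by
  have hconv : ∀ z : E, (Antitone fun k => ‖p k - z‖) →
      ∃ a, Tendsto (fun k => ‖p k - z‖) atTop (𝓝 a) := fun z hz =>
    ⟨_, tendsto_atTop_ciInf hz ⟨0, by rintro _ ⟨k, rfl⟩; positivity⟩⟩
  obtain ⟨a, ha⟩ := hconv x hx
  obtain ⟨b, hb⟩ := hconv y hy
  refine ⟨(b ^ 2 - a ^ 2 + ‖x‖ ^ 2 - ‖y‖ ^ 2) / 2, ?_⟩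
  -- polarization: `2 ⟪p, x - y⟫ = ‖p - y‖² - ‖p - x‖² + ‖x‖² - ‖y‖²`
  refine ((((hb.pow 2).sub (ha.pow 2)).add_const _).sub_const _).div_const 2 |>.congr fun k => ?_
  rw [norm_sub_sq_real, norm_sub_sq_real, inner_sub_right]
  ring

theorem exists_weakTendsto_of_fejer [CompleteSpace E] {S : Set E} (hS : S.Nonempty)
    (hfejer : ∀ z ∈ S, Antitone fun k => ‖p k - z‖)
    (hcluster : ∀ V : Ultrafilter ℕ, (V : Filter ℕ) ≤ atTop →
      ∀ x, WeakTendsto p (V : Filter ℕ) x → x ∈ S) :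
    ∃ x ∈ S, WeakTendsto p atTop x := by
  obtain ⟨z, hz⟩ := hS
  have hlim : ∀ V : Ultrafilter ℕ, (V : Filter ℕ) ≤ atTop →
      ∃ x ∈ S, WeakTendsto p (V : Filter ℕ) x := fun V hV =>
    have ⟨x, hx⟩ := exists_weakTendsto_of_isBoundedUnder V
      (isBoundedUnder_norm_of_antitone (hfejer z hz) _)
    ⟨x, hcluster V hV x hx, hx⟩
  obtain ⟨x, hxS, hx⟩ := hlim (Ultrafilter.of atTop) (Ultrafilter.of_le _)
  refine ⟨x, hxS, fun q => tendsto_iff_ultrafilter _ _ _ |>.2 fun V hV => ?_⟩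
  obtain ⟨y, hyS, hy⟩ := hlim V hV
  obtain ⟨l, hl⟩ := exists_tendsto_inner_sub_of_antitone (hfejer x hxS) (hfejer y hyS)
  have hxl : ⟪x, x - y⟫ = l := tendsto_nhds_unique (hx _) (hl.mono_left (Ultrafilter.of_le _))
  have hyl : ⟪y, x - y⟫ = l := tendsto_nhds_unique (hy _) (hl.mono_left hV)
  have hxy : x = y := by
    rw [← sub_eq_zero, ← inner_self_eq_zero (𝕜 := ℝ), inner_sub_left, hxl, hyl, sub_self]
  exact hxy ▸ hy q

end Fejer

theorem tendsto_zero_of_add_le_of_nonneg {a b : ℕ → ℝ} (ha : ∀ k, 0 ≤ a k) (hb : ∀ k, 0 ≤ b k)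
    (h : ∀ k, a (k + 1) + b k ≤ a k) : Tendsto b atTop (𝓝 0) := by
  have hsum : ∀ n, ∑ k ∈ Finset.range n, b k + a n ≤ a 0 := by
    intro n
    induction n with
    | zero => simp
    | succ n ih => rw [Finset.sum_range_succ]; linarith [h n]
  exact (summable_of_sum_range_le hb fun n => by linarith [hsum n, ha n]).tendsto_atTop_zero

section ProjectiveSplitting

variable {E : Type*} [NormedAddCommGroup E] [InnerProductSpace ℝ E]

/-- The step `p ↦ p - θ (φ / ‖d‖²) d` is a relaxed projection onto the halfspace
`{z | φ ≤ ⟪d, p - z⟫}`; thanks to `φ / 0 = 0` the bound also holds for `d = 0`. -/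
theorem norm_sub_smul_sub_sq_le {p z d : E} {φ θ : ℝ} (hφ : 0 ≤ φ) (hφz : φ ≤ ⟪d, p - z⟫)
    (hθ : 0 ≤ θ) :
    ‖p - (θ * (φ / ‖d‖ ^ 2)) • d - z‖ ^ 2 ≤ ‖p - z‖ ^ 2 - θ * (2 - θ) * (φ / ‖d‖) ^ 2 := by
  rcases eq_or_ne d 0 with rfl | hd
  · simp
  have hd2 : 0 < ‖d‖ ^ 2 := by positivity
  set t := θ * (φ / ‖d‖ ^ 2) with ht
  calc ‖p - t • d - z‖ ^ 2 = ‖p - z‖ ^ 2 - 2 * t * ⟪d, p - z⟫ + t ^ 2 * ‖d‖ ^ 2 := by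
        rw [sub_right_comm, norm_sub_sq_real, real_inner_smul_right, norm_smul, mul_pow,
          Real.norm_eq_abs, sq_abs, real_inner_comm]
        ring
    _ ≤ ‖p - z‖ ^ 2 - 2 * t * φ + t ^ 2 * ‖d‖ ^ 2 := by gcongr
    _ = ‖p - z‖ ^ 2 - θ * (2 - θ) * (φ / ‖d‖) ^ 2 := by
        rw [ht]
        field_simp
        ring

theorem div_mul_norm_le_inner_div_norm {d r : E} {ε C : ℝ} (hε : 0 < ε) (hC : 0 < C)
    (hdesc : ε * ‖r‖ ^ 2 ≤ ⟪d, r⟫) (hlip : ‖d‖ ≤ C * ‖r‖) : ε / C * ‖r‖ ≤ ⟪d, r⟫ / ‖d‖ := by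
  rcases eq_or_ne d 0 with rfl | hd
  · rw [inner_zero_left] at hdesc
    have hr : ‖r‖ ^ 2 = 0 := le_antisymm (by nlinarith) (by positivity)
    simp [pow_eq_zero_iff two_ne_zero |>.1 hr]
  rw [le_div_iff₀ (norm_pos_iff.2 hd)]
  calc ε / C * ‖r‖ * ‖d‖ ≤ ε / C * ‖r‖ * (C * ‖r‖) := by gcongr
    _ = ε * ‖r‖ ^ 2 := by field_simp
    _ ≤ ⟪d, r⟫ := hdesc

theorem IsMonotoneOp.norm_sub_smul_sub_sq_add_le {T : E → Set E} (hT : IsMonotoneOp T)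
    {z p ph d : E} (hz : 0 ∈ T z) (hd : d ∈ T ph) {ε C θ : ℝ} (hε : 0 < ε) (hC : 0 < C)
    (hθ₀ : 0 ≤ θ) (hθ₂ : θ ≤ 2) (hdesc : ε * ‖p - ph‖ ^ 2 ≤ ⟪d, p - ph⟫)
    (hlip : ‖d‖ ≤ C * ‖p - ph‖) :
    ‖p - (θ * (⟪d, p - ph⟫ / ‖d‖ ^ 2)) • d - z‖ ^ 2 + θ * (2 - θ) * (ε / C) ^ 2 * ‖p - ph‖ ^ 2 ≤
      ‖p - z‖ ^ 2 := by
  have hφ : 0 ≤ ⟪d, p - ph⟫ := le_trans (by positivity) hdesc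
  have hφz : ⟪d, p - ph⟫ ≤ ⟪d, p - z⟫ := by
    have hmono : 0 ≤ ⟪d, ph - z⟫ := by simpa using hT hd hz
    rw [← sub_add_sub_cancel p ph z, inner_add_right]
    linarith
  have hratio : (ε / C * ‖p - ph‖) ^ 2 ≤ (⟪d, p - ph⟫ / ‖d‖) ^ 2 := by
    gcongr
    exact div_mul_norm_le_inner_div_norm hε hC hdesc hlip
  have hθ : 0 ≤ θ * (2 - θ) := mul_nonneg hθ₀ (by linarith)
  nlinarith [norm_sub_smul_sub_sq_le hφ hφz hθ₀, mul_le_mul_of_nonneg_left hratio hθ]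

theorem exists_weakTendsto_of_decrease [CompleteSpace E] {T : E → Set E}
    (hT : IsMaxMonotoneOp T) (hzer : ∃ z, 0 ∈ T z) {c C : ℝ} (hc : 0 < c) {p ph d : ℕ → E}
    (hd : ∀ k, d k ∈ T (ph k)) (hlip : ∀ k, ‖d k‖ ≤ C * ‖p k - ph k‖)
    (hdecrease : ∀ z, 0 ∈ T z → ∀ k,
      ‖p (k + 1) - z‖ ^ 2 + c * ‖p k - ph k‖ ^ 2 ≤ ‖p k - z‖ ^ 2) :
    ∃ x, 0 ∈ T x ∧ WeakTendsto p atTop x := by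
  have hfejer : ∀ z ∈ {z | 0 ∈ T z}, Antitone fun k => ‖p k - z‖ := fun z hz =>
    antitone_nat_of_succ_le fun k => by
      have := hdecrease z hz k
      exact pow_le_pow_iff_left₀ (norm_nonneg _) (norm_nonneg _) two_ne_zero |>.1
        (by linarith [mul_nonneg hc.le (sq_nonneg ‖p k - ph k‖)])
  obtain ⟨z, hz⟩ := hzer
  have hres : Tendsto (fun k => p k - ph k) atTop (𝓝 0) := by
    have hsq := (tendsto_zero_of_add_le_of_nonneg (a := fun k => ‖p k - z‖ ^ 2)
      (b := fun k => c * ‖p k - ph k‖ ^ 2) (fun k => by positivity) (fun k => by positivity)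
      (hdecrease z hz)).const_mul c⁻¹ |>.sqrt
    rw [tendsto_zero_iff_norm_tendsto_zero]
    simpa [inv_mul_cancel_left₀ hc.ne', Real.sqrt_sq (norm_nonneg _)] using hsq
  have hdzero : Tendsto d atTop (𝓝 0) :=
    squeeze_zero_norm hlip (by simpa using hres.norm.const_mul C)
  obtain ⟨x, hx, hlim⟩ := exists_weakTendsto_of_fejer ⟨z, hz⟩ hfejer fun V hV x hx => by
    have hph : WeakTendsto ph V x := by
      simpa using hx.sub_of_tendsto_zero (hres.mono_left hV)
    have hbdd : IsBoundedUnder (· ≤ ·) V fun k => ‖ph k‖ :=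
      (isBoundedUnder_le_add (isBoundedUnder_norm_of_antitone (hfejer z hz) V)
        (hres.mono_left hV).norm.isBoundedUnder_le).mono_le
        (Eventually.of_forall fun k => by simpa using norm_sub_le (p k) (p k - ph k))
    exact hT.mem_of_weakTendsto (Eventually.of_forall hd) hph hbdd (hdzero.mono_left hV)
  exact ⟨x, hx, hlim⟩

theorem exists_weakTendsto_of_projective_steps [CompleteSpace E] {T : E → Set E}
    (hT : IsMaxMonotoneOp T) (hzer : ∃ z, 0 ∈ T z) {ε εθ C : ℝ} (hε : 0 < ε) (hεθ : 0 < εθ)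
    (hC : 0 < C) {θ : ℕ → ℝ} (hθ : ∀ k, εθ ≤ θ k ∧ θ k ≤ 2 - εθ) {p ph d : ℕ → E}
    (hd : ∀ k, d k ∈ T (ph k)) (hdesc : ∀ k, ε * ‖p k - ph k‖ ^ 2 ≤ ⟪d k, p k - ph k⟫)
    (hlip : ∀ k, ‖d k‖ ≤ C * ‖p k - ph k‖)
    (hp : ∀ k, p (k + 1) = p k - (θ k * (⟪d k, p k - ph k⟫ / ‖d k‖ ^ 2)) • d k) :
    ∃ x, 0 ∈ T x ∧ WeakTendsto p atTop x := by
  have h2εθ : 0 < 2 - εθ := by linarith [hθ 0]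
  refine exists_weakTendsto_of_decrease hT hzer (c := εθ * (2 - εθ) * (ε / C) ^ 2)
    (by positivity) hd hlip fun z hz k => ?_
  have hθk := hθ k
  have hstep := hT.1.norm_sub_smul_sub_sq_add_le hz (hd k) hε hC (by linarith) (by linarith)
    (hdesc k) (hlip k)
  rw [← hp k] at hstep
  have hc : εθ * (2 - εθ) * (ε / C) ^ 2 ≤ θ k * (2 - θ k) * (ε / C) ^ 2 :=
    mul_le_mul_of_nonneg_right (by nlinarith) (by positivity)
  nlinarith [sq_nonneg ‖p k - ph k‖]

end ProjectiveSplitting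

section PrimalDual

variable {E : Type*} [NormedAddCommGroup E] [InnerProductSpace ℝ E]

theorem exists_weakTendsto_of_projective_splitting [CompleteSpace E] {B : E → Set E}
    (hB : IsMaxMonotoneOp B) (K : E →L[ℝ] E) (hK : ∀ x, ⟪K x, x⟫ = 0) (hzer : ∃ z, -K z ∈ B z)
    {ε εθ C : ℝ} (hε : 0 < ε) (hεθ : 0 < εθ) (hC : 0 < C) (Q : ℕ → E →L[ℝ] E)
    (hQlow : ∀ k x, ε * ‖x‖ ^ 2 ≤ ⟪x, Q k x⟫) (hQup : ∀ k x, ‖Q k x‖ ≤ C * ‖x‖)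
    {θ : ℕ → ℝ} (hθ : ∀ k, εθ ≤ θ k ∧ θ k ≤ 2 - εθ) {p ph : ℕ → E}
    (hph : ∀ k, Q k (p k) - K (p k) - Q k (ph k) ∈ B (ph k))
    (hupd : ∀ k, Q k (p k - ph k) - K (p k - ph k) ≠ 0 →
      p (k + 1) = p k - (θ k * (⟪p k - ph k, Q k (p k - ph k)⟫ /
        ‖Q k (p k - ph k) - K (p k - ph k)‖ ^ 2)) •
          ((Q k (p k) - K (p k)) - (Q k (ph k) - K (ph k))))
    (hupd0 : ∀ k, Q k (p k - ph k) - K (p k - ph k) = 0 → p (k + 1) = p k) :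
    ∃ x, -K x ∈ B x ∧ WeakTendsto p atTop x := by
  have hT := hB.add_skew fun x y => by rw [← map_sub K]; exact hK _
  have hdiff : ∀ k, Q k (p k - ph k) - K (p k - ph k) =
      (Q k (p k) - K (p k)) - (Q k (ph k) - K (ph k)) :=
    fun k => by simp only [map_sub]; abel
  have hinner : ∀ k, ⟪Q k (p k - ph k) - K (p k - ph k), p k - ph k⟫ =
      ⟪p k - ph k, Q k (p k - ph k)⟫ :=
    fun k => by rw [inner_sub_left, hK, sub_zero, real_inner_comm]
  obtain ⟨z, hz⟩ := hzer
  obtain ⟨x, hx, hlim⟩ := exists_weakTendsto_of_projective_steps hT ⟨z, by simpa using hz⟩ hε hεθ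
    (add_pos_of_pos_of_nonneg hC (norm_nonneg K)) hθ (ph := ph)
    (d := fun k => Q k (p k - ph k) - K (p k - ph k))
    (fun k => by
      show _ - K (ph k) ∈ B (ph k)
      convert hph k using 1
      simp only [map_sub]
      abel)
    (fun k => (hinner k).symm ▸ hQlow k _)
    (fun k => (norm_sub_le _ _).trans <| by
      rw [add_mul]; exact add_le_add (hQup k _) (K.le_opNorm _))
    (fun k => by
      by_cases h0 : Q k (p k - ph k) - K (p k - ph k) = 0
      · rw [hupd0 k h0, h0, smul_zero, sub_zero]
      · rw [hupd k h0, hinner, ← hdiff])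
  exact ⟨x, by simpa using hx, hlim⟩

variable {ι : Type*} {G : ι → Type*} [∀ i, NormedAddCommGroup (G i)]
  {H : Type*} [NormedAddCommGroup H]

theorem norm_sq_prod_piLp [Fintype ι] (x : WithLp 2 (PiLp 2 G × H)) :
    ‖x‖ ^ 2 = ∑ i, ‖x.ofLp.1 i‖ ^ 2 + ‖x.ofLp.2‖ ^ 2 := by
  rw [WithLp.prod_norm_sq_eq_of_L2, PiLp.norm_sq_eq_of_L2]
  rfl

variable [∀ i, InnerProductSpace ℝ (G i)] [InnerProductSpace ℝ H]

noncomputable def blockScale (a : ι → ℝ) (b : ℝ) :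
    WithLp 2 (PiLp 2 G × H) →L[ℝ] WithLp 2 (PiLp 2 G × H) :=
  (WithLp.prodContinuousLinearEquiv 2 ℝ (PiLp 2 G) H).symm.toContinuousLinearMap ∘L
    ContinuousLinearMap.prodMap
      ((PiLp.continuousLinearEquiv 2 ℝ G).symm.toContinuousLinearMap ∘L
        (ContinuousLinearMap.pi fun i => a i • ContinuousLinearMap.proj i) ∘L
        (PiLp.continuousLinearEquiv 2 ℝ G).toContinuousLinearMap)
      (b • ContinuousLinearMap.id ℝ H) ∘L
    (WithLp.prodContinuousLinearEquiv 2 ℝ (PiLp 2 G) H).toContinuousLinearMap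

theorem blockScale_apply (a : ι → ℝ) (b : ℝ) (x : WithLp 2 (PiLp 2 G × H)) :
    blockScale a b x =
      WithLp.toLp 2 (WithLp.toLp 2 ((fun i => a i • x.ofLp.1 i) : ∀ i, G i), b • x.ofLp.2) :=
  rfl

variable [Fintype ι]

theorem le_inner_blockScale_self {a : ι → ℝ} {b c : ℝ} (ha : ∀ i, c ≤ a i) (hb : c ≤ b)
    (x : WithLp 2 (PiLp 2 G × H)) : c * ‖x‖ ^ 2 ≤ ⟪x, blockScale a b x⟫ := by
  rw [norm_sq_prod_piLp, blockScale_apply, WithLp.prod_inner_apply, PiLp.inner_apply, mul_add,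
    Finset.mul_sum]
  simp only [real_inner_smul_right, real_inner_self_eq_norm_sq]
  gcongr with i
  exact ha i

theorem norm_blockScale_le {a : ι → ℝ} {b C : ℝ} (ha : ∀ i, |a i| ≤ C) (hb : |b| ≤ C)
    (x : WithLp 2 (PiLp 2 G × H)) : ‖blockScale a b x‖ ≤ C * ‖x‖ := by
  have hC : 0 ≤ C := (abs_nonneg b).trans hb
  refine pow_le_pow_iff_left₀ (norm_nonneg _) (by positivity) two_ne_zero |>.1 ?_
  rw [mul_pow, norm_sq_prod_piLp, norm_sq_prod_piLp, blockScale_apply, mul_add, Finset.mul_sum]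
  simp only [norm_smul, mul_pow, Real.norm_eq_abs]
  gcongr with i
  exact ha i

variable [∀ i, CompleteSpace (G i)] [CompleteSpace H]

noncomputable def primalDualSkew (L : ∀ i, H →L[ℝ] G i) :
    WithLp 2 (PiLp 2 G × H) →L[ℝ] WithLp 2 (PiLp 2 G × H) :=
  (WithLp.prodContinuousLinearEquiv 2 ℝ (PiLp 2 G) H).symm.toContinuousLinearMap ∘L
    ContinuousLinearMap.prod
      ((PiLp.continuousLinearEquiv 2 ℝ G).symm.toContinuousLinearMap ∘L
        ContinuousLinearMap.pi fun i => -(L i) ∘L ContinuousLinearMap.snd ℝ (PiLp 2 G) H)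
      (∑ i, (L i).adjoint ∘L ContinuousLinearMap.proj i ∘L
        (PiLp.continuousLinearEquiv 2 ℝ G).toContinuousLinearMap ∘L
          ContinuousLinearMap.fst ℝ (PiLp 2 G) H) ∘L
    (WithLp.prodContinuousLinearEquiv 2 ℝ (PiLp 2 G) H).toContinuousLinearMap

theorem primalDualSkew_apply (L : ∀ i, H →L[ℝ] G i) (x : WithLp 2 (PiLp 2 G × H)) :
    primalDualSkew L x = WithLp.toLp 2 (WithLp.toLp 2 ((fun i => -(L i x.ofLp.2)) : ∀ i, G i),
      ∑ i, ContinuousLinearMap.adjoint (L i) (x.ofLp.1 i)) := by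
  simp [primalDualSkew]

theorem inner_primalDualSkew_self (L : ∀ i, H →L[ℝ] G i) (x : WithLp 2 (PiLp 2 G × H)) :
    ⟪primalDualSkew L x, x⟫ = 0 := by
  simp [primalDualSkew_apply, WithLp.prod_inner_apply, PiLp.inner_apply, sum_inner,
    ContinuousLinearMap.adjoint_inner_left, real_inner_comm]

end PrimalDual

/-- weak convergence of synchronous projective splitting, formulated as
nonlinear forward-backward splitting on the primal-dual product space
`𝒦 = G₁ × ⋯ × G_m × H` (with the ℓ²-product Hilbert structure). -/
theorem synchronous_projective_splitting_convergence
    {m : ℕ} {G : Fin m → Type*} [∀ i, NormedAddCommGroup (G i)]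
    [∀ i, InnerProductSpace ℝ (G i)] [∀ i, CompleteSpace (G i)]
    {H : Type*} [NormedAddCommGroup H] [InnerProductSpace ℝ H] [CompleteSpace H]
    (A : ∀ i, G i → Set (G i)) (hA : ∀ i, IsMaxMonotoneOp (A i))
    (An : H → Set H) (hAn : IsMaxMonotoneOp An)
    (L : ∀ i, H →L[ℝ] G i)
    -- the primal-dual operator B on 𝒦
    (B : (WithLp 2 ((PiLp 2 G) × H)) → Set (WithLp 2 ((PiLp 2 G) × H)))
    (hB : ∀ p q : WithLp 2 ((PiLp 2 G) × H),
      q ∈ B p ↔ (∀ i, p.ofLp.1 i ∈ A i (q.ofLp.1 i)) ∧ q.ofLp.2 ∈ An p.ofLp.2)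
    -- the skew-adjoint operator K on 𝒦
    (Kop : (WithLp 2 ((PiLp 2 G) × H)) → (WithLp 2 ((PiLp 2 G) × H)))
    (hKop : ∀ p : WithLp 2 ((PiLp 2 G) × H),
      Kop p = WithLp.toLp 2 (WithLp.toLp 2 ((fun i => -(L i p.ofLp.2)) : ∀ i, G i),
               ∑ i, ContinuousLinearMap.adjoint (L i) (p.ofLp.1 i)))
    -- nonemptiness of zer(B + K)
    (hzer : ∃ p : WithLp 2 ((PiLp 2 G) × H), -Kop p ∈ B p)
    -- step-sizes and relaxation parameters
    (ε εθ : ℝ) (hε : 0 < ε ∧ ε < 1) (hεθ : 0 < εθ ∧ εθ < 1)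
    (τ : ℕ → Fin m → ℝ) (σ : ℕ → ℝ)
    (hτ : ∀ k i, ε ≤ τ k i ∧ τ k i ≤ 1 / ε)
    (hσ : ∀ k, ε ≤ σ k ∧ σ k ≤ 1 / ε)
    (θ : ℕ → ℝ) (hθ : ∀ k, εθ ≤ θ k ∧ θ k ≤ 2 - εθ)
    -- the block-diagonal kernels Q_k
    (Q : ℕ → (WithLp 2 ((PiLp 2 G) × H)) → (WithLp 2 ((PiLp 2 G) × H)))
    (hQ : ∀ k (p : WithLp 2 ((PiLp 2 G) × H)),
      Q k p = WithLp.toLp 2 (WithLp.toLp 2 ((fun i => τ k i • p.ofLp.1 i) : ∀ i, G i), (σ k)⁻¹ • p.ofLp.2))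
    -- the algorithm
    (p ph : ℕ → WithLp 2 ((PiLp 2 G) × H))
    (hph : ∀ k, Q k (p k) - Kop (p k) - Q k (ph k) ∈ B (ph k))
    (hupd : ∀ k, Q k (p k - ph k) - Kop (p k - ph k) ≠ 0 →
      p (k + 1) = p k -
        (θ k * ((inner ℝ (p k - ph k) (Q k (p k - ph k)) : ℝ) /
            ‖Q k (p k - ph k) - Kop (p k - ph k)‖ ^ 2)) •
          ((Q k (p k) - Kop (p k)) - (Q k (ph k) - Kop (ph k))))
    (hupd0 : ∀ k, Q k (p k - ph k) - Kop (p k - ph k) = 0 → p (k + 1) = p k) :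
    ∃ pbar : WithLp 2 ((PiLp 2 G) × H), -Kop pbar ∈ B pbar ∧
      ∀ q : WithLp 2 ((PiLp 2 G) × H),
        Tendsto (fun k => (inner ℝ (p k) q : ℝ)) atTop (nhds (inner ℝ pbar q)) := by
  obtain ⟨hε0, -⟩ := hε
  have hK : Kop = primalDualSkew L :=
    funext fun x => (hKop x).trans (primalDualSkew_apply L x).symm
  have hQ' : Q = fun k => ⇑(blockScale (G := G) (H := H) (τ k) (σ k)⁻¹) :=
    funext fun k => funext fun x => (hQ k x).trans (blockScale_apply _ _ x).symm
  have hB' : B = opProd (opPi fun i => opInv (A i)) An := funext fun x => Set.ext (hB x)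
  subst hK hQ' hB'
  have hσ' : ∀ k, ε ≤ (σ k)⁻¹ ∧ (σ k)⁻¹ ≤ 1 / ε := fun k => by
    have hσk := hσ k
    have hσ0 : 0 < σ k := hε0.trans_le hσk.1
    rw [one_div] at hσk ⊢
    exact ⟨(le_inv_comm₀ hε0 hσ0).2 hσk.2, inv_anti₀ hε0 hσk.1⟩
  have habs : ∀ {t : ℝ}, ε ≤ t ∧ t ≤ 1 / ε → |t| ≤ 1 / ε :=
    fun h => (abs_of_pos (hε0.trans_le h.1)).trans_le h.2
  exact exists_weakTendsto_of_projective_splitting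
    ((IsMaxMonotoneOp.pi fun i => (hA i).inv).prod hAn) (primalDualSkew L)
    (inner_primalDualSkew_self L) hzer hε0 hεθ.1 (one_div_pos.2 hε0) _
    (fun k => le_inner_blockScale_self (fun i => (hτ k i).1) (hσ' k).1)
    (fun k => norm_blockScale_le (fun i => habs (hτ k i)) (habs (hσ' k)))
    hθ hph hupd hupd0
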